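/- For the implicit midpoint rule (s = 1, c₁ = ½, a₁₁ = ½, b₁ = 1) applied to the linear system -f₁ = J e₁ + G u₁, e₁ = Q x₁, x₁ = x₀ - (h/2) f₁, x₁ᵉⁿᵈ = x₀ - h f₁, with J skew-symmetric and Q symmetric, the exact discrete energy balance holds: ½ (x₁ᵉⁿᵈ)ᵀ Q x₁ᵉⁿᵈ - ½ x₀ᵀ Q x₀ = h (Gᵀe₁)ᵀ u₁. -/
import Mathlib


open Matrix

/-- Exact discrete energy balance for the implicit midpoint rule (the one-stage
Gauss–Legendre method) applied to a linear port-Hamiltonian system. -/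
theorem implicit_midpoint_exact_energy_balance {n m : ℕ}
    (J : Matrix (Fin n) (Fin n) ℝ) (hJ : Jᵀ = -J)
    (Q : Matrix (Fin n) (Fin n) ℝ) (hQ : Qᵀ = Q)
    (G : Matrix (Fin n) (Fin m) ℝ)
    (h : ℝ) (x₀ x₁ xend f₁ e₁ : Fin n → ℝ) (u₁ : Fin m → ℝ)
    (hf : -f₁ = J *ᵥ e₁ + G *ᵥ u₁)
    (he : e₁ = Q *ᵥ x₁)
    (hx₁ : x₁ = x₀ - (h/2) • f₁)
    (hxend : xend = x₀ - h • f₁) :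
    (1/2) * (xend ⬝ᵥ (Q *ᵥ xend)) - (1/2) * (x₀ ⬝ᵥ (Q *ᵥ x₀)) =
      h * ((Gᵀ *ᵥ e₁) ⬝ᵥ u₁) := by
  have sym : ∀ a b : Fin n → ℝ, a ⬝ᵥ (Q *ᵥ b) = b ⬝ᵥ (Q *ᵥ a) := by
    intro a b
    rw [dotProduct_mulVec, ← mulVec_transpose, hQ, dotProduct_comm]
  have skew : e₁ ⬝ᵥ (J *ᵥ e₁) = 0 := by
    have h1 : e₁ ⬝ᵥ (J *ᵥ e₁) = (Jᵀ *ᵥ e₁) ⬝ᵥ e₁ := by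
      rw [dotProduct_mulVec, ← mulVec_transpose]
    rw [hJ, neg_mulVec, neg_dotProduct, dotProduct_comm] at h1
    have h2 : (J *ᵥ e₁) ⬝ᵥ e₁ = 0 := by linarith
    rw [dotProduct_comm]
    exact h2
  -- RHS rewriting: h * (Gᵀ e₁ ⬝ u₁) = - h * (e₁ ⬝ f₁)
  have hG : (Gᵀ *ᵥ e₁) ⬝ᵥ u₁ = e₁ ⬝ᵥ (G *ᵥ u₁) := by
    rw [mulVec_transpose, ← dotProduct_mulVec]
  have hrhs : e₁ ⬝ᵥ (G *ᵥ u₁) = -(e₁ ⬝ᵥ f₁) := by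
    have : e₁ ⬝ᵥ (-f₁) = e₁ ⬝ᵥ (J *ᵥ e₁) + e₁ ⬝ᵥ (G *ᵥ u₁) := by
      rw [hf, dotProduct_add]
    rw [skew, zero_add] at this
    rw [← this, dotProduct_neg]
  subst hxend hx₁ he
  have key : f₁ ⬝ᵥ (Q *ᵥ (x₀ - (h/2) • f₁)) =
      f₁ ⬝ᵥ (Q *ᵥ x₀) - (h/2) * (f₁ ⬝ᵥ (Q *ᵥ f₁)) := by
    rw [mulVec_sub, dotProduct_sub, mulVec_smul, dotProduct_smul, smul_eq_mul]
  have expand : (x₀ - h • f₁) ⬝ᵥ (Q *ᵥ (x₀ - h • f₁)) =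
      x₀ ⬝ᵥ (Q *ᵥ x₀) - 2 * h * (f₁ ⬝ᵥ (Q *ᵥ x₀)) + h^2 * (f₁ ⬝ᵥ (Q *ᵥ f₁)) := by
    rw [mulVec_sub, dotProduct_sub, sub_dotProduct, sub_dotProduct,
      mulVec_smul, dotProduct_smul, smul_dotProduct, smul_dotProduct,
      dotProduct_smul, smul_eq_mul, smul_eq_mul, smul_eq_mul, smul_eq_mul,
      sym x₀ f₁]
    ring
  rw [expand, hG, hrhs, dotProduct_comm _ f₁, key]
  ring
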